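/- Assume each q_i is Lipschitz continuous. Let f ∈ B(I) be the unique fixed point of the operator T (the bounded fractal function), let G(f) = {(x, f(x)) : x ∈ I} be its graph, and let W_i(x, y) = (L_i(x), α_i y + q_i(x)). Then the closure of G(f) in I × ℝ is a nonempty compact set satisfying cl(G(f)) = ⋃_{i=1}^N W_i(cl(G(f))); moreover cl(G(f)) is the unique nonempty compact subset A of I × ℝ with A = ⋃_{i=1}^N W_i(A). -/

import Mathlib

open Set

noncomputable def aC (x : ℕ → ℝ) (N i : ℕ) : ℝ := (x (i + 1) - x i) / (x N - x 0)

noncomputable def bC (x : ℕ → ℝ) (N i : ℕ) : ℝ := (x N * x i - x 0 * x (i + 1)) / (x N - x 0)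

/-- The affine map `L i t = a i * t + b i`. -/
noncomputable def Lm (x : ℕ → ℝ) (N i : ℕ) (t : ℝ) : ℝ := aC x N i * t + bC x N i

/-- The inverse `L i ⁻¹ t = (t - b i) / a i` of the affine map `L i`. -/
noncomputable def LmInv (x : ℕ → ℝ) (N i : ℕ) (t : ℝ) : ℝ := (t - bC x N i) / aC x N i

open Filter Metric Topology
open scoped NNReal

/-!
Write `W i (t, y) = (L i t, α i y + q i t)`. The fixed-point equation `T f = f` says that `W i`
sends the point of the graph over `t ∈ [x 0, x N)` to the point of the graph over `L i t`, and
that `(x N, f (x N))` is fixed by the last map `W (N - 1)`. So the graph lies in the union of its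
images, while the images of the graph over `[x 0, x N)` lie in the graph. The iterates of
`W (N - 1)` move `(x 0, f (x 0))` inside the graph over `[x 0, x N)` towards that fixed point,
so the graph over `[x 0, x N)` is dense in the whole graph, and the closure `A` of the graph
satisfies `A = ⋃ i, W i '' A`.

The maps `W i` need not contract the max metric on `ℝ × ℝ`, but after rescaling the first
coordinate by a large factor `θ` they do: the rescaled maps have the same form, with `q i`
replaced by the flatter `q i (· / θ)`. Hence the Hutchinson operator contracts the Hausdorff
distance between nonempty compact sets, which forces uniqueness.
-/

theorem isCompact_closure_graphOn {s : Set ℝ} {f : ℝ → ℝ} {M : ℝ} (hs : IsCompact s)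
    (hf : ∀ t ∈ s, |f t| ≤ M) : IsCompact (closure (s.graphOn f)) :=
  (hs.prod (isCompact_Icc (a := -M) (b := M))).of_isClosed_subset isClosed_closure
    (closure_minimal (fun _ ⟨t, ht, hp⟩ => hp ▸ ⟨ht, abs_le.1 (hf t ht)⟩)
      (hs.isClosed.prod isClosed_Icc))

theorem exists_mem_Ico_succ {β : Type*} [LinearOrder β] {x : ℕ → β} {u : β} :
    ∀ {n : ℕ}, u ∈ Ico (x 0) (x n) → ∃ i < n, u ∈ Ico (x i) (x (i + 1))
  | 0, hu => absurd hu (by simp)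
  | n + 1, hu => by
    rcases lt_or_ge u (x n) with hlt | hge
    · obtain ⟨i, hi, hui⟩ := exists_mem_Ico_succ ⟨hu.1, hlt⟩
      exact ⟨i, by omega, hui⟩
    · exact ⟨n, by omega, hge, hu.2⟩

def hutchinson {X ι : Type*} (s : Finset ι) (W : ι → X → X) (A : Set X) : Set X :=
  ⋃ i ∈ s, W i '' A

section Hutchinson

variable {X Y ι : Type*} {s : Finset ι} {W : ι → X → X}

theorem mem_hutchinson {A : Set X} {p : X} :
    p ∈ hutchinson s W A ↔ ∃ i ∈ s, ∃ a ∈ A, W i a = p := by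
  simp only [hutchinson, mem_iUnion₂, mem_image, exists_prop]

theorem hutchinson_mono {A B : Set X} (h : A ⊆ B) : hutchinson s W A ⊆ hutchinson s W B :=
  biUnion_mono Subset.rfl fun _ _ => image_mono h

theorem image_hutchinson {φ : X → Y} {W' : ι → Y → Y}
    (hφ : ∀ i ∈ s, ∀ p, φ (W i p) = W' i (φ p)) (A : Set X) :
    φ '' hutchinson s W A = hutchinson s W' (φ '' A) := by
  simp only [hutchinson, image_iUnion₂, image_image]
  exact iUnion₂_congr fun i hi => image_congr fun p _ => hφ i hi p

theorem IsCompact.hutchinson [TopologicalSpace X] {D A : Set X}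
    (hW : ∀ i ∈ s, ContinuousOn (W i) D) (hA : IsCompact A) (hAD : A ⊆ D) :
    IsCompact (hutchinson s W A) :=
  s.isCompact_biUnion fun i hi => hA.image_of_continuousOn ((hW i hi).mono hAD)

theorem hutchinson_closure_eq [TopologicalSpace X] [T2Space X] {G G' : Set X}
    (hW : ∀ i ∈ s, ContinuousOn (W i) (closure G)) (hc : IsCompact (closure G))
    (hG'G : G' ⊆ G) (hGG' : G ⊆ closure G')
    (hmaps : hutchinson s W G' ⊆ G) (hcover : G ⊆ hutchinson s W G) :
    hutchinson s W (closure G) = closure G := by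
  have hclosure : closure G' = closure G :=
    (closure_mono hG'G).antisymm (closure_minimal hGG' isClosed_closure)
  refine Subset.antisymm ?_ ?_
  · simp only [hutchinson, iUnion₂_subset_iff]
    intro i hi
    rw [← hclosure] at hW ⊢
    calc W i '' closure G' ⊆ closure (W i '' G') := (hW i hi).image_closure
      _ ⊆ closure G := closure_mono fun p hp => hmaps (mem_biUnion hi hp)
      _ = closure G' := hclosure.symm
  · exact closure_minimal (hcover.trans (hutchinson_mono subset_closure))
      (hc.hutchinson hW Subset.rfl).isClosed

end Hutchinson

section Contraction

variable {X ι : Type*} [MetricSpace X] {s : Finset ι} {W : ι → X → X} {D : Set X} {r : ℝ≥0}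

theorem exists_mem_hutchinson_dist_le (hW : ∀ i ∈ s, LipschitzOnWith r (W i) D)
    {A B : Set X} (hAD : A ⊆ D) (hBD : B ⊆ D) (hB : IsCompact B) (hB₀ : B.Nonempty)
    (hAB : hausdorffEDist A B ≠ ⊤) {p : X} (hp : p ∈ hutchinson s W A) :
    ∃ p' ∈ hutchinson s W B, dist p p' ≤ r * hausdorffDist A B := by
  obtain ⟨i, hi, a, ha, rfl⟩ := mem_hutchinson.1 hp
  obtain ⟨b, hb, hab⟩ := hB.exists_infDist_eq_dist hB₀ a
  refine ⟨W i b, mem_hutchinson.2 ⟨i, hi, b, hb, rfl⟩, ?_⟩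
  calc dist (W i a) (W i b) ≤ r * dist a b := (hW i hi).dist_le_mul a (hAD ha) b (hBD hb)
    _ ≤ r * hausdorffDist A B := by
      rw [← hab]; gcongr; exact infDist_le_hausdorffDist_of_mem ha hAB

theorem hausdorffDist_hutchinson_le (hW : ∀ i ∈ s, LipschitzOnWith r (W i) D)
    {A B : Set X} (hAD : A ⊆ D) (hBD : B ⊆ D) (hA : IsCompact A) (hB : IsCompact B)
    (hA₀ : A.Nonempty) (hB₀ : B.Nonempty) :
    hausdorffDist (hutchinson s W A) (hutchinson s W B) ≤ r * hausdorffDist A B := by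
  have hAB := hausdorffEDist_ne_top_of_nonempty_of_bounded hA₀ hB₀ hA.isBounded hB.isBounded
  refine hausdorffDist_le_of_mem_dist (mul_nonneg r.2 hausdorffDist_nonneg)
    (fun p hp => exists_mem_hutchinson_dist_le hW hAD hBD hB hB₀ hAB hp) fun p hp => ?_
  obtain ⟨p', hp', hpp'⟩ := exists_mem_hutchinson_dist_le hW hBD hAD hA hA₀
    (by rwa [hausdorffEDist_comm]) hp
  exact ⟨p', hp', by rwa [hausdorffDist_comm] at hpp'⟩

theorem eq_of_hutchinson_eq (hr : r < 1) (hW : ∀ i ∈ s, LipschitzOnWith r (W i) D)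
    {A B : Set X} (hAD : A ⊆ D) (hBD : B ⊆ D) (hA : IsCompact A) (hB : IsCompact B)
    (hA₀ : A.Nonempty) (hB₀ : B.Nonempty)
    (hAfix : hutchinson s W A = A) (hBfix : hutchinson s W B = B) : A = B := by
  have hle := hausdorffDist_hutchinson_le hW hAD hBD hA hB hA₀ hB₀
  rw [hAfix, hBfix] at hle
  have hr' : (r : ℝ) < 1 := hr
  have hzero : hausdorffDist A B = 0 := by nlinarith [hausdorffDist_nonneg (s := A) (t := B)]
  exact (hA.isClosed.hausdorffDist_zero_iff_eq hB.isClosed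
    (hausdorffEDist_ne_top_of_nonempty_of_bounded hA₀ hB₀ hA.isBounded hB.isBounded)).1 hzero

theorem LipschitzOnWith.tendsto_iterate {f : X → X} (hf : LipschitzOnWith r f D) (hr : r < 1)
    (hD : MapsTo f D D) {P p : X} (hP : P ∈ D) (hfP : f P = P) (hp : p ∈ D) :
    Tendsto (fun n => f^[n] p) atTop (𝓝 P) := by
  have hdist : ∀ n, dist (f^[n] p) P ≤ r ^ n * dist p P := by
    intro n
    induction n with
    | zero => simp
    | succ n ih =>
      calc dist (f^[n + 1] p) P = dist (f (f^[n] p)) (f P) := by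
            rw [Function.iterate_succ_apply', hfP]
        _ ≤ r * dist (f^[n] p) P := hf.dist_le_mul _ (hD.iterate n hp) _ hP
        _ ≤ r * (r ^ n * dist p P) := by gcongr
        _ = r ^ (n + 1) * dist p P := by ring
  have hgeom : Tendsto (fun n => (r : ℝ) ^ n * dist p P) atTop (𝓝 0) := by
    simpa using (tendsto_pow_atTop_nhds_zero_of_lt_one r.2 hr).mul_const (dist p P)
  exact tendsto_iff_dist_tendsto_zero.2 (squeeze_zero (fun _ => dist_nonneg) hdist hgeom)

end Contraction

section FractalMap

def fractalMap (a b α : ℝ) (g : ℝ → ℝ) (p : ℝ × ℝ) : ℝ × ℝ := (a * p.1 + b, α * p.2 + g p.1)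

def scaleFst (θ : ℝ) (p : ℝ × ℝ) : ℝ × ℝ := (θ * p.1, p.2)

variable {a b α θ : ℝ} {g : ℝ → ℝ} {S : Set ℝ}

theorem scaleFst_fractalMap (hθ : θ ≠ 0) (p : ℝ × ℝ) :
    scaleFst θ (fractalMap a b α g p) =
      fractalMap a (θ * b) α (fun u => g (θ⁻¹ * u)) (scaleFst θ p) := by
  simp only [scaleFst, fractalMap, inv_mul_cancel_left₀ hθ]
  ring_nf

theorem scaleFst_inv_scaleFst (hθ : θ ≠ 0) (p : ℝ × ℝ) : scaleFst θ⁻¹ (scaleFst θ p) = p := by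
  simp [scaleFst, inv_mul_cancel_left₀ hθ]

theorem continuous_scaleFst : Continuous (scaleFst θ) := by
  unfold scaleFst; fun_prop

theorem mapsTo_scaleFst (hθ : θ ≠ 0) :
    MapsTo (scaleFst θ) (S ×ˢ univ) (((θ⁻¹ * ·) ⁻¹' S) ×ˢ univ) := fun p hp =>
  ⟨by simpa [scaleFst, inv_mul_cancel_left₀ hθ] using hp.1, trivial⟩

theorem continuousOn_fractalMap (hg : ContinuousOn g S) :
    ContinuousOn (fractalMap a b α g) (S ×ˢ univ) :=
  (by fun_prop : Continuous fun p : ℝ × ℝ => a * p.1 + b).continuousOn.prodMk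
    ((continuous_const.mul continuous_snd).continuousOn.add
      (hg.comp continuous_fst.continuousOn fun _ hp => hp.1))

theorem lipschitzOnWith_fractalMap {C r : ℝ≥0} (hg : LipschitzOnWith C g S)
    (ha : |a| ≤ r) (hα : |α| + C ≤ r) : LipschitzOnWith r (fractalMap a b α g) (S ×ˢ univ) := by
  refine LipschitzOnWith.of_dist_le_mul fun p hp p' hp' => ?_
  have h₁ : dist p.1 p'.1 ≤ dist p p' := by rw [Prod.dist_eq]; exact le_max_left _ _
  have h₂ : dist p.2 p'.2 ≤ dist p p' := by rw [Prod.dist_eq]; exact le_max_right _ _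
  rw [Prod.dist_eq, max_le_iff]
  constructor
  · calc dist (a * p.1 + b) (a * p'.1 + b) = |a| * dist p.1 p'.1 := by
          rw [dist_add_right, Real.dist_eq, Real.dist_eq, ← mul_sub, abs_mul]
      _ ≤ r * dist p p' := by gcongr
  · calc dist (α * p.2 + g p.1) (α * p'.2 + g p'.1)
        ≤ dist (α * p.2) (α * p'.2) + dist (g p.1) (g p'.1) := dist_add_add_le _ _ _ _
      _ ≤ |α| * dist p.2 p'.2 + C * dist p.1 p'.1 := by
          gcongr
          · rw [Real.dist_eq, Real.dist_eq, ← mul_sub, abs_mul]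
          · exact hg.dist_le_mul _ hp.1 _ hp'.1
      _ ≤ (|α| + C) * dist p p' := by rw [add_mul]; gcongr
      _ ≤ r * dist p p' := by gcongr

theorem eventually_lipschitzOnWith_fractalMap_rescaled {C r : ℝ≥0} (hg : LipschitzOnWith C g S)
    (ha : |a| ≤ r) (hα : |α| < r) :
    ∀ᶠ θ in atTop, LipschitzOnWith r (fractalMap a (θ * b) α (fun u => g (θ⁻¹ * u)))
      (((θ⁻¹ * ·) ⁻¹' S) ×ˢ univ) := by
  have hsmall : ∀ᶠ θ : ℝ in atTop, (C : ℝ) * θ⁻¹ < r - |α| :=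
    (tendsto_inv_atTop_zero.const_mul (C : ℝ)).eventually
      (gt_mem_nhds (by rw [mul_zero]; exact sub_pos.2 hα))
  filter_upwards [hsmall, eventually_gt_atTop 0] with θ hθ hθ₀
  have hg' : LipschitzOnWith (C * ‖θ⁻¹‖₊) (fun u => g (θ⁻¹ * u)) ((θ⁻¹ * ·) ⁻¹' S) :=
    hg.comp (lipschitzWith_smul θ⁻¹).lipschitzOnWith fun _ hu => hu
  refine lipschitzOnWith_fractalMap hg' ha ?_
  rw [NNReal.coe_mul, coe_nnnorm, Real.norm_of_nonneg (inv_nonneg.2 hθ₀.le)]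
  linarith

theorem tendsto_iterate_fractalMap (ha : |a| < 1) (hα : |α| < 1)
    (hg : ∃ C, LipschitzOnWith C g S) (hS : MapsTo (a * · + b) S S) {P p : ℝ × ℝ}
    (hP : P ∈ S ×ˢ univ) (hfix : fractalMap a b α g P = P) (hp : p ∈ S ×ˢ univ) :
    Tendsto (fun n => (fractalMap a b α g)^[n] p) atTop (𝓝 P) := by
  obtain ⟨C, hC⟩ := hg
  obtain ⟨r, hr, hr₁⟩ := exists_between (max_lt ha hα : max ‖a‖₊ ‖α‖₊ < 1)
  obtain ⟨θ, hW, hθ⟩ := ((eventually_lipschitzOnWith_fractalMap_rescaled (b := b) hC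
    ((le_max_left _ _).trans hr.le) ((le_max_right _ _).trans_lt hr)).and
    (eventually_ne_atTop 0)).exists
  set W' := fractalMap a (θ * b) α (fun u => g (θ⁻¹ * u))
  have hsemiconj : Function.Semiconj (scaleFst θ) (fractalMap a b α g) W' :=
    scaleFst_fractalMap hθ
  have hmaps : MapsTo W' (((θ⁻¹ * ·) ⁻¹' S) ×ˢ univ) (((θ⁻¹ * ·) ⁻¹' S) ×ˢ univ) :=
    fun q hq => ⟨by
      show θ⁻¹ * (a * q.1 + θ * b) ∈ S
      rw [mul_add, inv_mul_cancel_left₀ hθ, mul_left_comm]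
      exact hS hq.1, trivial⟩
  have hlim := hW.tendsto_iterate hr₁ hmaps
    (mapsTo_scaleFst hθ hP) (by rw [← hsemiconj, hfix]) (mapsTo_scaleFst hθ hp)
  have hback := ((continuous_scaleFst (θ := θ⁻¹)).tendsto _).comp hlim
  rw [scaleFst_inv_scaleFst hθ] at hback
  refine hback.congr fun n => ?_
  simp only [Function.comp_apply, ← hsemiconj.iterate_right n p, scaleFst_inv_scaleFst hθ]

end FractalMap

section FractalIFS

variable {ι : Type*} {s : Finset ι} {a b α : ι → ℝ} {g : ι → ℝ → ℝ} {S : Set ℝ}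

theorem exists_lipschitzOnWith_fractalMap_rescaled (ha : ∀ i ∈ s, |a i| < 1)
    (hα : ∀ i ∈ s, |α i| < 1) (hg : ∀ i ∈ s, ∃ C, LipschitzOnWith C (g i) S) :
    ∃ θ : ℝ, θ ≠ 0 ∧ ∃ r : ℝ≥0, r < 1 ∧ ∀ i ∈ s,
      LipschitzOnWith r (fractalMap (a i) (θ * b i) (α i) (fun u => g i (θ⁻¹ * u)))
        (((θ⁻¹ * ·) ⁻¹' S) ×ˢ univ) := by
  have hsup : s.sup (fun i => max ‖a i‖₊ ‖α i‖₊) < 1 :=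
    (Finset.sup_lt_iff zero_lt_one).2 fun i hi => max_lt (ha i hi) (hα i hi)
  obtain ⟨r, hr, hr₁⟩ := exists_between hsup
  have hle : ∀ i ∈ s, max ‖a i‖₊ ‖α i‖₊ < r := fun i hi =>
    (Finset.le_sup (f := fun i => max ‖a i‖₊ ‖α i‖₊) hi).trans_lt hr
  have hθ : ∀ᶠ θ in atTop, θ ≠ 0 ∧ ∀ i ∈ s,
      LipschitzOnWith r (fractalMap (a i) (θ * b i) (α i) (fun u => g i (θ⁻¹ * u)))
        (((θ⁻¹ * ·) ⁻¹' S) ×ˢ univ) := by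
    refine (eventually_ne_atTop 0).and ((eventually_all_finset s).2 fun i hi => ?_)
    obtain ⟨C, hC⟩ := hg i hi
    exact eventually_lipschitzOnWith_fractalMap_rescaled (b := b i) hC
      (le_of_lt (lt_of_le_of_lt (le_max_left _ _) (hle i hi)))
      (lt_of_le_of_lt (le_max_right _ _) (hle i hi))
  obtain ⟨θ, hθ₀, hθ⟩ := hθ.exists
  exact ⟨θ, hθ₀, r, hr₁, hθ⟩

theorem fractalMap_attractor_unique (ha : ∀ i ∈ s, |a i| < 1) (hα : ∀ i ∈ s, |α i| < 1)
    (hg : ∀ i ∈ s, ∃ C, LipschitzOnWith C (g i) S) {A B : Set (ℝ × ℝ)}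
    (hAS : A ⊆ S ×ˢ univ) (hBS : B ⊆ S ×ˢ univ) (hA : IsCompact A) (hB : IsCompact B)
    (hA₀ : A.Nonempty) (hB₀ : B.Nonempty)
    (hAfix : hutchinson s (fun i => fractalMap (a i) (b i) (α i) (g i)) A = A)
    (hBfix : hutchinson s (fun i => fractalMap (a i) (b i) (α i) (g i)) B = B) : A = B := by
  obtain ⟨θ, hθ, r, hr, hW⟩ := exists_lipschitzOnWith_fractalMap_rescaled (b := b) ha hα hg
  have hconj (E : Set (ℝ × ℝ)) :
      scaleFst θ '' hutchinson s (fun i => fractalMap (a i) (b i) (α i) (g i)) E =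
        hutchinson s (fun i => fractalMap (a i) (θ * b i) (α i) (fun u => g i (θ⁻¹ * u)))
          (scaleFst θ '' E) :=
    image_hutchinson (fun _ _ => scaleFst_fractalMap hθ) E
  have hAB : scaleFst θ '' A = scaleFst θ '' B :=
    eq_of_hutchinson_eq hr hW ((mapsTo_scaleFst hθ).image_subset.trans' (image_mono hAS))
      ((mapsTo_scaleFst hθ).image_subset.trans' (image_mono hBS))
      (hA.image continuous_scaleFst) (hB.image continuous_scaleFst) (hA₀.image _) (hB₀.image _)
      (by rw [← hconj, hAfix]) (by rw [← hconj, hBfix])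
  exact image_injective.2 (fun p p' h => by
    rw [← scaleFst_inv_scaleFst hθ p, h, scaleFst_inv_scaleFst hθ]) hAB

end FractalIFS

section Knots

variable {N i : ℕ} {x : ℕ → ℝ}

theorem Lm_zero (h : x N ≠ x 0) : Lm x N i (x 0) = x i := by
  unfold Lm aC bC
  field_simp [sub_ne_zero.2 h]
  ring

theorem Lm_last (h : x N ≠ x 0) : Lm x N i (x N) = x (i + 1) := by
  unfold Lm aC bC
  field_simp [sub_ne_zero.2 h]
  ring

theorem Lm_LmInv (h : aC x N i ≠ 0) (u : ℝ) : Lm x N i (LmInv x N i u) = u := by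
  unfold Lm LmInv
  field_simp
  ring

theorem LmInv_Lm (h : aC x N i ≠ 0) (t : ℝ) : LmInv x N i (Lm x N i t) = t := by
  unfold Lm LmInv
  field_simp
  ring

theorem strictMono_Lm (h : 0 < aC x N i) : StrictMono (Lm x N i) := fun _ _ hst => by
  unfold Lm
  gcongr

theorem knots_zero_lt_last (hx : ∀ i, i < N → x i < x (i + 1)) (hN : 0 < N) : x 0 < x N :=
  strictMonoOn_Iic_of_lt_succ hx (Nat.zero_le N) (mem_Iic.2 le_rfl) hN

theorem knot_mem_Icc (hx : ∀ i, i < N → x i < x (i + 1)) {j : ℕ} (hj : j ≤ N) :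
    x j ∈ Icc (x 0) (x N) :=
  ⟨(strictMonoOn_Iic_of_lt_succ hx).monotoneOn (Nat.zero_le N) hj (Nat.zero_le j),
    (strictMonoOn_Iic_of_lt_succ hx).monotoneOn hj (mem_Iic.2 le_rfl) hj⟩

theorem Ico_knots_subset (hx : ∀ i, i < N → x i < x (i + 1)) (hi : i < N) :
    Ico (x i) (x (i + 1)) ⊆ Ico (x 0) (x N) :=
  Ico_subset_Ico (knot_mem_Icc hx hi.le).1 (knot_mem_Icc hx hi).2

theorem aC_pos (hx : ∀ i, i < N → x i < x (i + 1)) (hi : i < N) : 0 < aC x N i :=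
  div_pos (sub_pos.2 (hx i hi)) (sub_pos.2 (knots_zero_lt_last hx (by omega)))

theorem abs_aC_lt_one (hx : ∀ i, i < N → x i < x (i + 1)) (hN : 2 ≤ N) (hi : i < N) :
    |aC x N i| < 1 := by
  have hmono := strictMonoOn_Iic_of_lt_succ hx
  have hlt : x (i + 1) - x i < x N - x 0 := by
    rcases Nat.eq_zero_or_pos i with rfl | hi₀
    · linarith [hmono (show 1 ∈ Iic N by simp; omega) (mem_Iic.2 le_rfl) (by omega : 1 < N)]
    · linarith [hmono (Nat.zero_le N) (by simp; omega) hi₀,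
        hmono.monotoneOn (by simp; omega) (mem_Iic.2 le_rfl) (Nat.succ_le_of_lt hi)]
  rw [abs_of_pos (aC_pos hx hi), aC, div_lt_one (sub_pos.2 (knots_zero_lt_last hx (by omega)))]
  exact hlt

theorem Lm_mem_Ico (hx : ∀ i, i < N → x i < x (i + 1)) (hi : i < N) {t : ℝ}
    (ht : t ∈ Ico (x 0) (x N)) : Lm x N i t ∈ Ico (x i) (x (i + 1)) := by
  have hne := (knots_zero_lt_last hx (by omega)).ne'
  rw [← Lm_zero (i := i) hne, ← Lm_last (i := i) hne]
  exact ⟨(strictMono_Lm (aC_pos hx hi)).monotone ht.1, strictMono_Lm (aC_pos hx hi) ht.2⟩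

theorem LmInv_mem_Ico (hx : ∀ i, i < N → x i < x (i + 1)) (hi : i < N) {u : ℝ}
    (hu : u ∈ Ico (x i) (x (i + 1))) : LmInv x N i u ∈ Ico (x 0) (x N) := by
  have hne := (knots_zero_lt_last hx (by omega)).ne'
  have hmono := strictMono_Lm (aC_pos hx hi)
  rw [← Lm_zero (i := i) hne, ← Lm_last (i := i) hne, ← Lm_LmInv (aC_pos hx hi).ne' u] at hu
  exact ⟨hmono.le_iff_le.1 hu.1, hmono.lt_iff_lt.1 hu.2⟩

theorem Lm_pred_last (hx : ∀ i, i < N → x i < x (i + 1)) (hN : 0 < N) :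
    Lm x N (N - 1) (x N) = x N := by
  rw [Lm_last (knots_zero_lt_last hx hN).ne', Nat.sub_add_cancel hN]

theorem mapsTo_Lm_Icc (hx : ∀ i, i < N → x i < x (i + 1)) (hi : i < N) :
    MapsTo (Lm x N i) (Icc (x 0) (x N)) (Icc (x 0) (x N)) := fun t ht => by
  have hne := (knots_zero_lt_last hx (by omega)).ne'
  have hmono := (strictMono_Lm (aC_pos hx hi)).monotone
  exact ⟨(knot_mem_Icc hx hi.le).1.trans ((Lm_zero hne).symm.trans_le (hmono ht.1)),
    ((hmono ht.2).trans_eq (Lm_last hne)).trans (knot_mem_Icc hx hi).2⟩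

end Knots

section FractalFunction

variable {N : ℕ} {x α : ℕ → ℝ} {q : ℕ → ℝ → ℝ} {f : ℝ → ℝ}

theorem apply_Lm_eq_of_fixed {T : (ℝ → ℝ) → ℝ → ℝ} (hx : ∀ i, i < N → x i < x (i + 1))
    (hT : ∀ g : ℝ → ℝ, ∀ i, i < N → ∀ t : ℝ,
      t ∈ Ico (x i) (x (i + 1)) ∨ (i = N - 1 ∧ t = x N) →
      T g t = α i * g (LmInv x N i t) + q i (LmInv x N i t))
    (hfix : ∀ t ∈ Icc (x 0) (x N), T f t = f t) {i : ℕ} (hi : i < N) {t : ℝ}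
    (ht : t ∈ Ico (x 0) (x N)) : f (Lm x N i t) = α i * f t + q i t := by
  have hmem := Lm_mem_Ico hx hi ht
  rw [← hfix _ (Ico_subset_Icc_self (Ico_knots_subset hx hi hmem)), hT f i hi _ (Or.inl hmem),
    LmInv_Lm (aC_pos hx hi).ne']

theorem apply_last_eq_of_fixed {T : (ℝ → ℝ) → ℝ → ℝ} (hx : ∀ i, i < N → x i < x (i + 1))
    (hN : 0 < N)
    (hT : ∀ g : ℝ → ℝ, ∀ i, i < N → ∀ t : ℝ,
      t ∈ Ico (x i) (x (i + 1)) ∨ (i = N - 1 ∧ t = x N) →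
      T g t = α i * g (LmInv x N i t) + q i (LmInv x N i t))
    (hfix : ∀ t ∈ Icc (x 0) (x N), T f t = f t) :
    f (x N) = α (N - 1) * f (x N) + q (N - 1) (x N) := by
  have hLmInv : LmInv x N (N - 1) (x N) = x N := by
    conv_lhs => rw [← Lm_pred_last hx hN]
    exact LmInv_Lm (aC_pos hx (by omega)).ne' _
  calc f (x N) = T f (x N) := (hfix _ (knot_mem_Icc hx le_rfl)).symm
    _ = α (N - 1) * f (x N) + q (N - 1) (x N) := by
      rw [hT f (N - 1) (by omega) (x N) (Or.inr ⟨rfl, rfl⟩), hLmInv]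

theorem fractalMap_apply_graph
    (hself : ∀ i, i < N → ∀ t ∈ Ico (x 0) (x N), f (Lm x N i t) = α i * f t + q i t)
    {i : ℕ} (hi : i < N) {t : ℝ} (ht : t ∈ Ico (x 0) (x N)) :
    fractalMap (aC x N i) (bC x N i) (α i) (q i) (t, f t) = (Lm x N i t, f (Lm x N i t)) :=
  Prod.ext rfl (hself i hi t ht).symm

theorem fractalMap_last (hx : ∀ i, i < N → x i < x (i + 1)) (hN : 0 < N)
    (hlast : f (x N) = α (N - 1) * f (x N) + q (N - 1) (x N)) :
    fractalMap (aC x N (N - 1)) (bC x N (N - 1)) (α (N - 1)) (q (N - 1)) (x N, f (x N)) =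
      (x N, f (x N)) :=
  Prod.ext (Lm_pred_last hx hN) hlast.symm

theorem hutchinson_graphOn_Ico_subset (hx : ∀ i, i < N → x i < x (i + 1))
    (hself : ∀ i, i < N → ∀ t ∈ Ico (x 0) (x N), f (Lm x N i t) = α i * f t + q i t) :
    hutchinson (Finset.range N) (fun i => fractalMap (aC x N i) (bC x N i) (α i) (q i))
      ((Ico (x 0) (x N)).graphOn f) ⊆ (Icc (x 0) (x N)).graphOn f := by
  intro p hp
  obtain ⟨i, hi, _, ⟨t, ht, rfl⟩, rfl⟩ := mem_hutchinson.1 hp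
  have hi := Finset.mem_range.1 hi
  rw [fractalMap_apply_graph hself hi ht]
  exact mem_image_of_mem _ (Ico_subset_Icc_self (Ico_knots_subset hx hi (Lm_mem_Ico hx hi ht)))

theorem graphOn_Icc_subset_hutchinson (hx : ∀ i, i < N → x i < x (i + 1)) (hN : 0 < N)
    (hself : ∀ i, i < N → ∀ t ∈ Ico (x 0) (x N), f (Lm x N i t) = α i * f t + q i t)
    (hlast : f (x N) = α (N - 1) * f (x N) + q (N - 1) (x N)) :
    (Icc (x 0) (x N)).graphOn f ⊆
      hutchinson (Finset.range N) (fun i => fractalMap (aC x N i) (bC x N i) (α i) (q i))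
        ((Icc (x 0) (x N)).graphOn f) := by
  rintro _ ⟨u, hu, rfl⟩
  rcases hu.2.lt_or_eq with hlt | rfl
  · obtain ⟨i, hi, hui⟩ := exists_mem_Ico_succ ⟨hu.1, hlt⟩
    have ht := LmInv_mem_Ico hx hi hui
    refine mem_hutchinson.2 ⟨i, Finset.mem_range.2 hi, _,
      mem_image_of_mem _ (Ico_subset_Icc_self ht), ?_⟩
    rw [fractalMap_apply_graph hself hi ht, Lm_LmInv (aC_pos hx hi).ne']
  · exact mem_hutchinson.2 ⟨N - 1, Finset.mem_range.2 (by omega), _, mem_image_of_mem _ hu,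
      fractalMap_last hx hN hlast⟩

theorem last_mem_closure_graphOn_Ico (hx : ∀ i, i < N → x i < x (i + 1)) (hN : 2 ≤ N)
    (hα : |α (N - 1)| < 1) (hq : ∃ C, LipschitzOnWith C (q (N - 1)) (Icc (x 0) (x N)))
    (hself : ∀ i, i < N → ∀ t ∈ Ico (x 0) (x N), f (Lm x N i t) = α i * f t + q i t)
    (hlast : f (x N) = α (N - 1) * f (x N) + q (N - 1) (x N)) :
    (x N, f (x N)) ∈ closure ((Ico (x 0) (x N)).graphOn f) := by
  have hN₁ : N - 1 < N := by omega
  have hx₀ : x 0 ∈ Ico (x 0) (x N) := ⟨le_rfl, knots_zero_lt_last hx (by omega)⟩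
  have hmaps : MapsTo (fractalMap (aC x N (N - 1)) (bC x N (N - 1)) (α (N - 1)) (q (N - 1)))
      ((Ico (x 0) (x N)).graphOn f) ((Ico (x 0) (x N)).graphOn f) := by
    rintro _ ⟨t, ht, rfl⟩
    rw [fractalMap_apply_graph hself hN₁ ht]
    exact mem_image_of_mem _ (Ico_knots_subset hx hN₁ (Lm_mem_Ico hx hN₁ ht))
  have hlim := tendsto_iterate_fractalMap (abs_aC_lt_one hx hN hN₁) hα hq (mapsTo_Lm_Icc hx hN₁)
    ⟨knot_mem_Icc hx le_rfl, trivial⟩ (fractalMap_last hx (by omega) hlast)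
    (p := (x 0, f (x 0))) ⟨Ico_subset_Icc_self hx₀, trivial⟩
  exact mem_closure_of_tendsto hlim
    (Eventually.of_forall fun n => hmaps.iterate n (mem_image_of_mem _ hx₀))

end FractalFunction

/-- The closure of the graph of the bounded fractal function is the unique nonempty compact
subset `A` of `I × ℝ` with `A = ⋃ i, W i '' A`, where `W i (x,y) = (L i x, α i y + q i x)`. -/
theorem stmt8
    (N : ℕ) (hN : 2 ≤ N)
    (x : ℕ → ℝ)
    (hx : ∀ i, i < N → x i < x (i + 1))
    (α : ℕ → ℝ) (hα : ∀ i, i < N → |α i| < 1)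
    (q : ℕ → ℝ → ℝ)
    (hq : ∀ i, i < N → ∃ C, ∀ u ∈ Icc (x 0) (x N), ∀ v ∈ Icc (x 0) (x N),
      |q i u - q i v| ≤ C * |u - v|)
    (T : (ℝ → ℝ) → ℝ → ℝ)
    (hT : ∀ g : ℝ → ℝ, ∀ i, i < N → ∀ t : ℝ,
      t ∈ Ico (x i) (x (i + 1)) ∨ (i = N - 1 ∧ t = x N) →
      T g t = α i * g (LmInv x N i t) + q i (LmInv x N i t))
    (f : ℝ → ℝ)
    (hfb : ∃ M, ∀ t ∈ Icc (x 0) (x N), |f t| ≤ M)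
    (hfix : ∀ t ∈ Icc (x 0) (x N), T f t = f t) :
    ∃ A : Set (ℝ × ℝ),
      A = closure ((fun t => (t, f t)) '' Icc (x 0) (x N)) ∧
      A.Nonempty ∧ IsCompact A ∧ A ⊆ (Icc (x 0) (x N)) ×ˢ (univ : Set ℝ) ∧
      A = ⋃ i ∈ Finset.range N, (fun p : ℝ × ℝ => (Lm x N i p.1, α i * p.2 + q i p.1)) '' A ∧
      ∀ B : Set (ℝ × ℝ), B.Nonempty → IsCompact B →
        B ⊆ (Icc (x 0) (x N)) ×ˢ (univ : Set ℝ) →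
        B = ⋃ i ∈ Finset.range N, (fun p : ℝ × ℝ => (Lm x N i p.1, α i * p.2 + q i p.1)) '' B →
        B = A := by
  obtain ⟨M, hM⟩ := hfb
  have hself := fun i hi t ht => apply_Lm_eq_of_fixed (i := i) (t := t) hx hT hfix hi ht
  have hlast := apply_last_eq_of_fixed hx (by omega) hT hfix
  have hqLip : ∀ i ∈ Finset.range N, ∃ C, LipschitzOnWith C (q i) (Icc (x 0) (x N)) := by
    intro i hi
    obtain ⟨C, hC⟩ := hq i (Finset.mem_range.1 hi)
    exact ⟨_, LipschitzOnWith.of_dist_le' fun u hu v hv => by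
      simpa only [Real.dist_eq] using hC u hu v hv⟩
  have hx₀N : x 0 ≤ x N := (knots_zero_lt_last hx (by omega)).le
  set A := closure ((Icc (x 0) (x N)).graphOn f)
  have hA : IsCompact A := isCompact_closure_graphOn isCompact_Icc hM
  have hA₀ : A.Nonempty := ((nonempty_Icc.2 hx₀N).image _).closure
  have hAS : A ⊆ Icc (x 0) (x N) ×ˢ univ :=
    closure_minimal (fun _ ⟨t, ht, hp⟩ => hp ▸ ⟨ht, trivial⟩) (isClosed_Icc.prod isClosed_univ)
  have hdense : (Icc (x 0) (x N)).graphOn f ⊆ closure ((Ico (x 0) (x N)).graphOn f) := by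
    rw [← Ico_insert_right hx₀N, graphOn_insert, insert_subset_iff]
    exact ⟨last_mem_closure_graphOn_Ico hx hN (hα _ (by omega)) (hqLip _ (by simp; omega))
      hself hlast, subset_closure⟩
  have hAfix : hutchinson (Finset.range N)
      (fun i => fractalMap (aC x N i) (bC x N i) (α i) (q i)) A = A :=
    hutchinson_closure_eq
      (fun i hi => (hqLip i hi).elim fun _ hC =>
        (continuousOn_fractalMap hC.continuousOn).mono hAS) hA
      (image_mono Ico_subset_Icc_self) hdense (hutchinson_graphOn_Ico_subset hx hself)
      (graphOn_Icc_subset_hutchinson hx (by omega) hself hlast)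
  refine ⟨A, rfl, hA₀, hA, hAS, hAfix.symm, fun B hB₀ hB hBS hBfix => ?_⟩
  exact fractalMap_attractor_unique (fun i hi => abs_aC_lt_one hx hN (Finset.mem_range.1 hi))
    (fun i hi => hα i (Finset.mem_range.1 hi)) hqLip hBS hAS hB hA hB₀ hA₀ hBfix.symm hAfix
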